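/- arXiv:1802.10581 — 4 statements merged into one kernel-verified Lean document; each statement's English description precedes it below -/
import Mathlib

section
/- Let L be an even integral lattice and ν an automorphism of L whose fixed sublattice L^ν is trivial. If ν has odd order m, or if ⟨α, ν^{m/2}(α)⟩ is even for all α ∈ L (when m is even), then a standard lift ν̂ of ν to the lattice VOA automorphism group has order m; otherwise ν̂ has order 2m. In particular, for a standard lift: if m is odd, the lift has order m. -/
/-!
The lift acts on `L × ℤˣ` as the skew product `(α, s) ↦ (ν α, u(α) s)`, whose `j`-th iterate
moves `α` to `ν^j α` and multiplies the sign by the orbit product `u(α) u(ν α) ⋯ u(ν^{j-1} α)`.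
Since `ν` has order `m`, the `m`-th iterate fixes every lattice point and multiplies by the orbit
product of length `m`, which is the prescribed sign.  If that sign is always `1`, the lift has
order `m`. Otherwise it is `-1` at some `α₀`, so the lift has order `2m`: signs square to `1`, the
iterate at `m` flips the sign at `α₀`, and every other iterate below `2m` moves some lattice point.
-/

open Finset Function

/-- For `n > 0` this says that `n` is the order of `f` in `Function.End X`. -/
def HasExactPeriod {X : Type*} (f : X → X) (n : ℕ) : Prop :=
  (∀ x, f^[n] x = x) ∧ ∀ j, 0 < j → j < n → ∃ x, f^[j] x ≠ x

theorem HasExactPeriod.exists_iterate_ne_of_lt_two_mul {X : Type*} {f : X → X} {n j : ℕ}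
    (hf : HasExactPeriod f n) (hj : 0 < j) (hj2 : j < 2 * n) (hjn : j ≠ n) :
    ∃ x, f^[j] x ≠ x := by
  rcases hjn.lt_or_gt with hlt | hgt
  · exact hf.2 j hj hlt
  · obtain ⟨x, hx⟩ := hf.2 (j - n) (by omega) (by omega)
    refine ⟨x, ?_⟩
    rwa [show j = (j - n) + n by omega, iterate_add_apply, hf.1]

section SkewShift

variable {X M : Type*} [CommMonoid M]

def skewShift (σ : X → X) (u : X → M) (p : X × M) : X × M :=
  (σ p.1, u p.1 * p.2)

def orbitProd (σ : X → X) (u : X → M) (n : ℕ) (x : X) : M :=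
  ∏ i ∈ range n, u (σ^[i] x)

variable {σ : X → X} {u : X → M}

theorem skewShift_iterate (j : ℕ) (p : X × M) :
    (skewShift σ u)^[j] p = (σ^[j] p.1, orbitProd σ u j p.1 * p.2) := by
  induction j generalizing p with
  | zero => simp [orbitProd]
  | succ j ih =>
    rw [iterate_succ_apply, ih]
    simp [skewShift, orbitProd, prod_range_succ', mul_assoc]

theorem skewShift_iterate_of_iterate_eq_id {n : ℕ} (hn : ∀ x, σ^[n] x = x) (p : X × M) :
    (skewShift σ u)^[n] p = (p.1, orbitProd σ u n p.1 * p.2) := by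
  rw [skewShift_iterate, hn]

theorem exists_skewShift_iterate_ne {j : ℕ} (h : ∃ x, σ^[j] x ≠ x) :
    ∃ p, (skewShift σ u)^[j] p ≠ p := by
  obtain ⟨x, hx⟩ := h
  refine ⟨(x, 1), fun hp => hx ?_⟩
  rw [skewShift_iterate] at hp
  exact (Prod.ext_iff.1 hp).1

theorem hasExactPeriod_skewShift {n : ℕ} (hσ : HasExactPeriod σ n)
    (hu : ∀ x, orbitProd σ u n x = 1) : HasExactPeriod (skewShift σ u) n :=
  ⟨fun p => by rw [skewShift_iterate_of_iterate_eq_id hσ.1, hu, one_mul],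
    fun j hj hjn => exists_skewShift_iterate_ne (hσ.2 j hj hjn)⟩

theorem hasExactPeriod_skewShift_two_mul {n : ℕ} (hσ : HasExactPeriod σ n)
    (hsq : ∀ x, orbitProd σ u n x ^ 2 = 1) (hne : ∃ x, orbitProd σ u n x ≠ 1) :
    HasExactPeriod (skewShift σ u) (2 * n) := by
  have hn := skewShift_iterate_of_iterate_eq_id (u := u) hσ.1
  refine ⟨fun p => ?_, fun j hj hj2 => ?_⟩
  · rw [two_mul, iterate_add_apply, hn, hn, ← mul_assoc, ← sq, hsq, one_mul]
  · rcases eq_or_ne j n with rfl | hjn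
    · obtain ⟨x, hx⟩ := hne
      exact ⟨(x, 1), by simpa [hn] using hx⟩
    · exact exists_skewShift_iterate_ne (hσ.exists_iterate_ne_of_lt_two_mul hj hj2 hjn)

end SkewShift

namespace AddAut

variable {A : Type*} [Add A]

theorem coe_nsmul (ν : AddAut A) (n : ℕ) : ⇑(n • ν) = ν^[n] := by
  induction n with
  | zero => rfl
  | succ n ih => rw [succ_nsmul, coe_add, ih, iterate_succ]

theorem hasExactPeriod_addOrderOf (ν : AddAut A) : HasExactPeriod ν (addOrderOf ν) := by
  refine ⟨fun x => by rw [← coe_nsmul, addOrderOf_nsmul_eq_zero]; rfl, fun j hj hjn => ?_⟩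
  by_contra! h
  have hj0 : j • ν = 0 := AddEquiv.ext fun x => by rw [coe_nsmul]; exact h x
  exact (addOrderOf_le_of_nsmul_eq_zero hj hj0).not_gt hjn

end AddAut

open Classical in
theorem stmt8_general (L : Type*) [AddCommGroup L] (B : L →+ L →+ ℤ)
    (ν : AddAut L) (m : ℕ) (hord : addOrderOf ν = m)
    (u : L → ℤˣ)
    (hpow : ∀ α : L, (∏ i ∈ Finset.range m, u ((i • ν) α)) =
      if Even m then (-1 : ℤˣ) ^ (B α (((m / 2) • ν) α)) else 1) :
    ∀ f : L × ℤˣ → L × ℤˣ, (f = fun p => (ν p.1, u p.1 * p.2)) →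
      if Odd m ∨ ∀ α : L, Even (B α (((m / 2) • ν) α)) then
        (∀ p, f^[m] p = p) ∧ (∀ j, 0 < j → j < m → ∃ p, f^[j] p ≠ p)
      else
        (∀ p, f^[2 * m] p = p) ∧ (∀ j, 0 < j → j < 2 * m → ∃ p, f^[j] p ≠ p) := by
  rintro f rfl
  have hν : HasExactPeriod ν m := by rw [← hord]; exact ν.hasExactPeriod_addOrderOf
  have hprod (α : L) : orbitProd ν u m α =
      if Even m then (-1 : ℤˣ) ^ (B α (((m / 2) • ν) α)) else 1 := by
    rw [← hpow α]
    simp only [orbitProd, AddAut.coe_nsmul]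
  split_ifs with h
  · refine hasExactPeriod_skewShift hν fun α => ?_
    rw [hprod]
    rcases h with hodd | heven
    · rw [if_neg (Nat.not_even_iff_odd.2 hodd)]
    · split_ifs
      · exact (heven α).neg_one_zpow
      · rfl
  · simp only [not_or, not_forall] at h
    obtain ⟨hodd, α₀, hα₀⟩ := h
    refine hasExactPeriod_skewShift_two_mul hν (fun α => Int.units_sq _) ⟨α₀, ?_⟩
    rw [hprod, if_pos (Nat.not_odd_iff_even.1 hodd), (Int.not_even_iff_odd.1 hα₀).neg_one_zpow]
    decide

open Classical in
/-- Order of a standard lift, at the level of the cocycle action.  Let `ν` be an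
automorphism of order `m` of an even lattice `(L, B)` with trivial fixed sublattice,
and let `u : L → {±1}` be the cocycle phase of a standard lift, so that the `m`-th
power of the lift acts on `e_α` by the sign `(-1)^{⟨α, ν^{m/2} α⟩}` when `m` is even,
and trivially when `m` is odd.  Modelling the lift as
`f : (α, s) ↦ (ν α, u(α)·s)` on basis elements with phases, the lift has order `m`
if `m` is odd or `⟨α, ν^{m/2} α⟩` is even for all `α`, and order `2m` otherwise. -/
theorem stmt8 (L : Type*) [AddCommGroup L] (B : L →+ L →+ ℤ)
    (hsymm : ∀ x y : L, B x y = B y x) (heven : ∀ x : L, Even (B x x))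
    (ν : AddAut L) (m : ℕ) (hm : 0 < m) (hord : addOrderOf ν = m)
    (hfix : ∀ α : L, ν α = α → α = 0)
    (u : L → ℤˣ) (hu0 : u 0 = 1)
    (hpow : ∀ α : L, (∏ i ∈ Finset.range m, u ((i • ν) α)) =
      if Even m then (-1 : ℤˣ) ^ (B α (((m / 2) • ν) α)) else 1) :
    ∀ f : L × ℤˣ → L × ℤˣ, (f = fun p => (ν p.1, u p.1 * p.2)) →
      if Odd m ∨ ∀ α : L, Even (B α (((m / 2) • ν) α)) then
        (∀ p, f^[m] p = p) ∧ (∀ j, 0 < j → j < m → ∃ p, f^[j] p ≠ p)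
      else
        (∀ p, f^[2 * m] p = p) ∧ (∀ j, 0 < j → j < 2 * m → ∃ p, f^[j] p ≠ p) :=
  stmt8_general L B ν m hord u hpow
end

section
/- Suppose conditions (1) ∑_{t|n} b_t ≡ 0 mod 2, (2) ∑_{t|n} t·b_t ≡ 0 mod 24, (3) ∑_{t|n} (n/t)·b_t ≡ 0 mod 24 hold for integers b_t indexed by divisors t of n. Then for any positive integer k, the powered cycle type C^k = ∏_{t|n} (t/gcd(t,k))^{gcd(t,k)·b_t} satisfies (1') ∑_{t|n} gcd(t,k)·b_t ≡ 0 mod 2. -/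
/-- If a cycle type `∏_{t∣n} t^{b_t}` satisfies the eta-quotient conditions
`∑ b_t ≡ 0 (2)`, `∑ t·b_t ≡ 0 (24)`, `∑ (n/t)·b_t ≡ 0 (24)`, then its `k`-th power
satisfies condition (1): `∑ gcd(t,k)·b_t ≡ 0 (mod 2)`. -/
theorem stmt11 (n : ℕ) (hn : 0 < n) (b : ℕ → ℤ) (k : ℕ) (hk : 0 < k)
    (h1 : (2 : ℤ) ∣ ∑ t ∈ n.divisors, b t)
    (h2 : (24 : ℤ) ∣ ∑ t ∈ n.divisors, (t : ℤ) * b t)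
    (h3 : (24 : ℤ) ∣ ∑ t ∈ n.divisors, ((n / t : ℕ) : ℤ) * b t) :
    (2 : ℤ) ∣ ∑ t ∈ n.divisors, ((Nat.gcd t k : ℕ) : ℤ) * b t := by
  rcases Nat.even_or_odd k with hke | hko
  · -- k even: gcd(t,k) ≡ t (mod 2)
    have h2' : (2 : ℤ) ∣ ∑ t ∈ n.divisors, (t : ℤ) * b t :=
      dvd_trans ⟨12, by norm_num⟩ h2
    have hd : (2 : ℤ) ∣ ∑ t ∈ n.divisors, (((Nat.gcd t k : ℕ) : ℤ) - t) * b t := by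
      apply Finset.dvd_sum
      intro t ht
      apply dvd_mul_of_dvd_left
      have hiff : Even (Nat.gcd t k) ↔ Even t := by
        constructor
        · intro hg
          exact even_iff_two_dvd.mpr
            ((even_iff_two_dvd.mp hg).trans (Nat.gcd_dvd_left t k))
        · intro htv
          exact even_iff_two_dvd.mpr
            (Nat.dvd_gcd (even_iff_two_dvd.mp htv) (even_iff_two_dvd.mp hke))
      have hev : Even (((Nat.gcd t k : ℕ) : ℤ) - t) := by
        rw [Int.even_sub]
        simpa only [Int.even_coe_nat] using hiff
      exact hev.two_dvd
    have := dvd_add hd h2'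
    simpa [sub_mul, Finset.sum_sub_distrib, sub_add_cancel] using this
  · -- k odd: gcd(t,k) odd
    have hd : (2 : ℤ) ∣ ∑ t ∈ n.divisors, (((Nat.gcd t k : ℕ) : ℤ) - 1) * b t := by
      apply Finset.dvd_sum
      intro t ht
      apply dvd_mul_of_dvd_left
      have hg : Odd (Nat.gcd t k) := hko.of_dvd_nat (Nat.gcd_dvd_right t k)
      have hev : Even (((Nat.gcd t k : ℕ) : ℤ) - 1) := by
        rw [Int.even_sub]
        simp only [Int.even_coe_nat]
        constructor
        · intro h; exact absurd h ((Nat.not_even_iff_odd.mpr hg))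
        · intro h; exact absurd h (by decide)
      exact hev.two_dvd
    have := dvd_add hd h1
    simpa [sub_mul, Finset.sum_sub_distrib, sub_add_cancel] using this
end

section
/- Suppose conditions (1) ∑_{t|n} b_t ≡ 0 mod 2, (2) ∑_{t|n} t·b_t ≡ 0 mod 24, (3) ∑_{t|n} (n/t)·b_t ≡ 0 mod 24 hold for integers b_t indexed by divisors t of n. Then for any positive integer k, ∑_{t|n} (n/gcd(n,k)) · gcd(t,k)² · b_t / t is an integer divisible by 24. -/
private def coe3 (n k t : ℕ) : ℕ := (n / Nat.gcd n k) / (t / Nat.gcd t k) * Nat.gcd t k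

lemma div_gcd_pos {t k : ℕ} (ht0 : 0 < t) : 0 < t / Nat.gcd t k :=
  Nat.div_pos (Nat.le_of_dvd ht0 (Nat.gcd_dvd_left t k)) (Nat.gcd_pos_of_pos_left k ht0)

lemma quot_dvd {n t : ℕ} {k : ℕ} (hk : 0 < k) (hn : 0 < n) (ht : t ∣ n) :
    (t / Nat.gcd t k) ∣ (n / Nat.gcd n k) := by
  have ht0 : 0 < t := Nat.pos_of_dvd_of_pos ht hn
  rw [← Nat.factorization_le_iff_dvd (div_gcd_pos ht0).ne' (div_gcd_pos hn).ne',
    Nat.factorization_div (Nat.gcd_dvd_left t k), Nat.factorization_div (Nat.gcd_dvd_left n k)]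
  intro p
  simp only [Finsupp.tsub_apply]
  have e2 : (Nat.gcd n k).factorization p = min (n.factorization p) (k.factorization p) := by
    rw [Nat.factorization_gcd hn.ne' hk.ne']; simp
  have e3 : (Nat.gcd t k).factorization p = min (t.factorization p) (k.factorization p) := by
    rw [Nat.factorization_gcd ht0.ne' hk.ne']; simp
  have e4 : t.factorization p ≤ n.factorization p :=
    (Nat.factorization_le_iff_dvd ht0.ne' hn.ne').mpr ht p
  omega

lemma gcd_mul_split (t j p : ℕ) (ht : 0 < t) (hj : 0 < j) (hp : 0 < p) :
    Nat.gcd t (j * p) = Nat.gcd t j * Nat.gcd (t / Nat.gcd t j) p := by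
  have h1 : Nat.gcd t j ≠ 0 := (Nat.gcd_pos_of_pos_left j ht).ne'
  have h2 : 0 < t / Nat.gcd t j := div_gcd_pos ht
  apply Nat.eq_of_factorization_eq (Nat.gcd_pos_of_pos_left _ ht).ne'
    (Nat.mul_ne_zero h1 (Nat.gcd_pos_of_pos_left p h2).ne')
  intro q
  rw [Nat.factorization_mul h1 ((Nat.gcd_pos_of_pos_left p h2).ne'),
    Nat.factorization_gcd ht.ne' (Nat.mul_pos hj hp).ne',
    Nat.factorization_gcd ht.ne' hj.ne',
    Nat.factorization_gcd h2.ne' hp.ne',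
    Nat.factorization_div (Nat.gcd_dvd_left t j),
    Nat.factorization_mul hj.ne' hp.ne', Nat.factorization_gcd ht.ne' hj.ne']
  simp only [Finsupp.add_apply, Finsupp.inf_apply, Finsupp.tsub_apply]
  omega

lemma level_split (n j p : ℕ) (hn : 0 < n) (hj : 0 < j) (hp : 0 < p) :
    (n / Nat.gcd n j) / Nat.gcd (n / Nat.gcd n j) p = n / Nat.gcd n (j * p) := by
  have h2 : 0 < n / Nat.gcd n j := div_gcd_pos hn
  apply Nat.eq_of_factorization_eq (div_gcd_pos h2).ne' (div_gcd_pos hn).ne'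
  intro q
  rw [Nat.factorization_div (Nat.gcd_dvd_left _ p),
    Nat.factorization_div (Nat.gcd_dvd_left n (j*p)),
    Nat.factorization_div (Nat.gcd_dvd_left n j),
    Nat.factorization_gcd h2.ne' hp.ne', Nat.factorization_div (Nat.gcd_dvd_left n j),
    Nat.factorization_gcd hn.ne' (Nat.mul_pos hj hp).ne',
    Nat.factorization_gcd hn.ne' hj.ne',
    Nat.factorization_mul hj.ne' hp.ne']
  simp only [Finsupp.add_apply, Finsupp.inf_apply, Finsupp.tsub_apply]
  omega



lemma coe3_one (n t : ℕ) : coe3 n 1 t = n / t := by simp [coe3]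

lemma coe3_mul_t {n t : ℕ} (k : ℕ) (hk : 0 < k) (hn : 0 < n) (ht : t ∣ n)
    (quot_dvd : (t / Nat.gcd t k) ∣ (n / Nat.gcd n k)) :
    coe3 n k t * t = (n / Nat.gcd n k) * Nat.gcd t k ^ 2 := by
  have ht0 : 0 < t := Nat.pos_of_dvd_of_pos ht hn
  have hq0 : 0 < t / Nat.gcd t k :=
    Nat.div_pos (Nat.le_of_dvd ht0 (Nat.gcd_dvd_left t k)) (Nat.gcd_pos_of_pos_left k ht0)
  rw [coe3]
  obtain ⟨e, he⟩ := quot_dvd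
  have h1 : t / Nat.gcd t k * Nat.gcd t k = t := Nat.div_mul_cancel (Nat.gcd_dvd_left t k)
  have h2 : n / Nat.gcd n k / (t / Nat.gcd t k) = e := by
    rw [he]; exact Nat.mul_div_cancel_left e hq0
  rw [h2, he]
  have h3 : e * Nat.gcd t k * t
      = e * Nat.gcd t k * (t / Nat.gcd t k * Nat.gcd t k) := by rw [h1]
  rw [h3]; ring


lemma sq_cancel {c w X : ℤ} (h1 : c ∣ w * w - 1) (h : c ∣ w * X) : c ∣ X := by
  have e : X = w * (w * X) - (w * w - 1) * X := by ring
  rw [e]; exact dvd_sub (h.mul_left w) (h1.mul_right X)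

lemma odd_sq8 {w : ℤ} (hw : w % 2 = 1) : (8 : ℤ) ∣ w * w - 1 := by
  obtain ⟨r, rfl⟩ : ∃ r, w = 2 * r + 1 := ⟨w / 2, by omega⟩
  obtain ⟨q, hq⟩ := Int.even_mul_succ_self r
  exact ⟨q, by linear_combination 4 * hq⟩

lemma div_cong8 {w s : ℕ} (hs : s ∣ w) (hodd : ¬ 2 ∣ s) :
    (8 : ℤ) ∣ ((w / s : ℕ) : ℤ) - (w : ℤ) * (s : ℤ) := by
  have h : ((w / s : ℕ) : ℤ) * s = w := by exact_mod_cast Nat.div_mul_cancel hs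
  have h8 : (8 : ℤ) ∣ (s : ℤ) * s - 1 := odd_sq8 (by omega)
  have e : ((w / s : ℕ) : ℤ) - w * s = -(((w / s : ℕ) : ℤ)) * ((s:ℤ) * s - 1) := by
    rw [← h]; ring
  rw [e]; exact h8.mul_left _

lemma dvd_sum_sub {α : Type} (D : Finset α) (f g : α → ℤ) (c : ℤ)
    (h : ∀ s ∈ D, c ∣ f s - g s) : c ∣ (∑ s ∈ D, f s) - ∑ s ∈ D, g s := by
  rw [← Finset.sum_sub_distrib]; exact Finset.dvd_sum h

lemma odd_coprime_two {s : ℕ} (h : ¬ 2 ∣ s) : Nat.Coprime s 2 :=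
  ((Nat.Prime.coprime_iff_not_dvd Nat.prime_two).mpr h).symm

lemma eight_dvd_B (m : ℕ) (hm : 0 < m) (h2m : 2 ∣ m) (c : ℕ → ℤ)
    (H1 : (2:ℤ) ∣ ∑ s ∈ m.divisors, c s)
    (H2 : (8:ℤ) ∣ ∑ s ∈ m.divisors, (s:ℤ) * c s)
    (H3 : (8:ℤ) ∣ ∑ s ∈ m.divisors, ((m / s : ℕ):ℤ) * c s) :
    (8:ℤ) ∣ ∑ s ∈ m.divisors.filter (fun s => ¬ 2 ∣ s), ((m / 2 / s : ℕ):ℤ) * c s := by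
  set D := m.divisors with hD
  set q := m / 2 with hq
  have hqm : 2 * q = m := Nat.mul_div_cancel' h2m
  set T2 := ∑ s ∈ D, (s:ℤ) * c s with hT2def
  set T3 := ∑ s ∈ D, ((m / s : ℕ):ℤ) * c s with hT3def
  -- membership facts
  have hmem : ∀ s ∈ D, s ∣ m := fun s hs => (Nat.mem_divisors.mp hs).1
  have hsq : ∀ s ∈ D.filter (fun s => ¬ 2 ∣ s), s ∣ q := by
    intro s hs
    obtain ⟨hsD, hs2⟩ := Finset.mem_filter.mp hs
    have hsm : s ∣ m := hmem s hsD
    rw [← hqm] at hsm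
    exact (odd_coprime_two hs2).dvd_of_dvd_mul_left hsm
  -- abbreviations
  set B := ∑ s ∈ D.filter (fun s => ¬ 2 ∣ s), ((q / s : ℕ):ℤ) * c s with hB
  set S0 := ∑ s ∈ D.filter (fun s => ¬ 2 ∣ s), (s:ℤ) * c s with hS0
  -- C2 : 8 ∣ B - q * S0
  have C2 : (8:ℤ) ∣ B - (q:ℤ) * S0 := by
    rw [hB, hS0, Finset.mul_sum]
    apply dvd_sum_sub
    intro s hs
    have hs2 : ¬ 2 ∣ s := (Finset.mem_filter.mp hs).2
    have key := div_cong8 (hsq s hs) hs2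
    have e : ((q / s : ℕ):ℤ) * c s - (q:ℤ) * ((s:ℤ) * c s)
        = (((q / s : ℕ):ℤ) - (q:ℤ) * (s:ℤ)) * c s := by ring
    rw [e]; exact key.mul_right _
  -- splitting of T2
  have hsplit2 := Finset.sum_filter_add_sum_filter_not D (fun s => 2 ∣ s)
      (fun s => (s:ℤ) * c s)
  have hEeven : (2:ℤ) ∣ ∑ s ∈ D.filter (fun s => 2 ∣ s), (s:ℤ) * c s := by
    apply Finset.dvd_sum
    intro s hs
    have h2s : 2 ∣ s := (Finset.mem_filter.mp hs).2
    exact Dvd.dvd.mul_right (by exact_mod_cast Int.natCast_dvd_natCast.mpr h2s) _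
  have hT2 : (2:ℤ) ∣ ∑ s ∈ D, (s:ℤ) * c s := dvd_trans ⟨4, rfl⟩ H2
  have E0 : (2:ℤ) ∣ S0 := by
    have := hsplit2
    omega
  -- final assembly given 8 ∣ q * S0
  have finish8 : (8:ℤ) ∣ (q:ℤ) * S0 → (8:ℤ) ∣ B := by
    intro h
    have hB8 := dvd_add C2 h
    rwa [sub_add_cancel] at hB8
  by_cases h8 : 8 ∣ m
  · -- v2(m) ≥ 3
    apply finish8
    have h4q : 4 ∣ q := by omega
    obtain ⟨a, ha⟩ := h4q; obtain ⟨b, hb⟩ := E0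
    exact ⟨(a:ℤ) * b, by rw [hb]; push_cast [ha]; ring⟩
  · -- v2(m) ∈ {1, 2}
    have hnot4 : ∀ s ∈ D, ¬ 8 ∣ s → True := fun _ _ _ => trivial
    -- common: divisors that are even, with u = s/2
    have hfact : ∀ s ∈ D.filter (fun s => 2 ∣ s), 2 * (s / 2) = s ∧ (s / 2) ∣ q ∧ (m / s : ℕ) = q / (s / 2) := by
      intro s hs
      obtain ⟨hsD, h2s⟩ := Finset.mem_filter.mp hs
      have hsm : s ∣ m := hmem s hsD
      have hu : 2 * (s / 2) = s := Nat.mul_div_cancel' h2s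
      have huq : (s / 2) ∣ q := by
        rw [← Nat.mul_dvd_mul_iff_left (show 0 < 2 by norm_num), hu, hqm]; exact hsm
      refine ⟨hu, huq, ?_⟩
      conv_lhs => rw [← hqm, ← hu]
      rw [Nat.mul_div_mul_left _ _ (show 0 < 2 by norm_num)]
    by_cases h4 : 4 ∣ m
    · -- v2(m) = 2
      set w := m / 4 with hwdef
      have hwm : 4 * w = m := Nat.mul_div_cancel' h4
      have hwodd : ¬ 2 ∣ w := by omega
      have hqw : q = 2 * w := by omega
      -- second-level split of the even divisors
      set E := D.filter (fun s => 2 ∣ s) with hEdef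
      set S1 := ∑ s ∈ E.filter (fun s => ¬ 4 ∣ s), ((s / 2 : ℕ):ℤ) * c s with hS1def
      set S2 := ∑ s ∈ E.filter (fun s => 4 ∣ s), ((s / 4 : ℕ):ℤ) * c s with hS2def
      -- facts about s ∈ E.filter (4 ∣ ·)
      have hfact4 : ∀ s ∈ E.filter (fun s => 4 ∣ s),
          4 * (s / 4) = s ∧ (s / 4) ∣ w ∧ (m / s : ℕ) = w / (s / 4)
            ∧ ¬ 2 ∣ (s / 4) ∧ ¬ 2 ∣ (w / (s / 4)) := by
        intro s hs
        obtain ⟨hsE, h4s⟩ := Finset.mem_filter.mp hs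
        have hsm : s ∣ m := hmem s (Finset.mem_filter.mp hsE).1
        have hr : 4 * (s / 4) = s := Nat.mul_div_cancel' h4s
        have hrw : (s / 4) ∣ w := by
          rw [← Nat.mul_dvd_mul_iff_left (show 0 < 4 by norm_num), hr, hwm]; exact hsm
        have hms : (m / s : ℕ) = w / (s / 4) := by
          conv_lhs => rw [← hwm, ← hr]
          rw [Nat.mul_div_mul_left _ _ (show 0 < 4 by norm_num)]
        have hrodd : ¬ 2 ∣ (s / 4) := fun h => hwodd (h.trans hrw)
        have hwr : ¬ 2 ∣ (w / (s / 4)) := fun h => hwodd (h.trans (Nat.div_dvd_of_dvd hrw))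
        exact ⟨hr, hrw, hms, hrodd, hwr⟩
      -- facts about s ∈ E.filter (¬ 4 ∣ ·) : u = s/2 is odd and divides w
      have hfact2 : ∀ s ∈ E.filter (fun s => ¬ 4 ∣ s),
          ¬ 2 ∣ (s / 2) ∧ (s / 2) ∣ w ∧ (m / s : ℕ) = 2 * (w / (s / 2)) := by
        intro s hs
        obtain ⟨hsE, h4s⟩ := Finset.mem_filter.mp hs
        obtain ⟨hu, huq, hms⟩ := hfact s hsE
        have huodd : ¬ 2 ∣ (s / 2) := fun h => h4s (by omega)
        have huw : (s / 2) ∣ w := (odd_coprime_two huodd).dvd_of_dvd_mul_left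
          (hqw ▸ huq)
        refine ⟨huodd, huw, ?_⟩
        rw [hms, hqw, Nat.mul_div_assoc 2 huw]
      -- T2 = S0 + 2*S1 + 4*S2
      have hsplitE := Finset.sum_filter_add_sum_filter_not E (fun s => 4 ∣ s)
          (fun s => (s:ℤ) * c s)
      have hE4 : ∑ s ∈ E.filter (fun s => 4 ∣ s), (s:ℤ) * c s = 4 * S2 := by
        rw [hS2def, Finset.mul_sum]
        refine Finset.sum_congr rfl (fun s hs => ?_)
        obtain ⟨hr, -, -, -, -⟩ := hfact4 s hs
        have : (s:ℤ) = 4 * ((s/4 : ℕ):ℤ) := by exact_mod_cast hr.symm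
        rw [this]; ring
      have hE2 : ∑ s ∈ E.filter (fun s => ¬ 4 ∣ s), (s:ℤ) * c s = 2 * S1 := by
        rw [hS1def, Finset.mul_sum]
        refine Finset.sum_congr rfl (fun s hs => ?_)
        obtain ⟨hu, -, -⟩ := hfact s (Finset.mem_filter.mp hs).1
        have : (s:ℤ) = 2 * ((s/2 : ℕ):ℤ) := by exact_mod_cast hu.symm
        rw [this]; ring
      have hT2eq : T2 = S0 + 2 * S1 + 4 * S2 := by
        have h1 := hsplit2
        have h2 := hsplitE
        rw [hE4, hE2] at h2
        omega
      -- parity of S2 via T3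
      have hsplit3 := Finset.sum_filter_add_sum_filter_not D (fun s => 2 ∣ s)
          (fun s => ((m / s : ℕ):ℤ) * c s)
      have hsplit3E := Finset.sum_filter_add_sum_filter_not E (fun s => 4 ∣ s)
          (fun s => ((m / s : ℕ):ℤ) * c s)
      rw [← hEdef, ← hT3def] at hsplit3
      have hA0even : (2:ℤ) ∣ ∑ s ∈ D.filter (fun s => ¬ 2 ∣ s), ((m / s : ℕ):ℤ) * c s := by
        apply Finset.dvd_sum
        intro s hs
        have hms : (m / s : ℕ) = 2 * (q / s) := by
          rw [← hqm, Nat.mul_div_assoc 2 (hsq s hs)]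
        rw [hms]
        exact Dvd.dvd.mul_right (by push_cast; exact ⟨_, rfl⟩) _
      have hA1even : (2:ℤ) ∣ ∑ s ∈ E.filter (fun s => ¬ 4 ∣ s), ((m / s : ℕ):ℤ) * c s := by
        apply Finset.dvd_sum
        intro s hs
        obtain ⟨-, -, hms⟩ := hfact2 s hs
        rw [hms]
        exact Dvd.dvd.mul_right (by push_cast; exact ⟨_, rfl⟩) _
      have hA2cong : (2:ℤ) ∣ (∑ s ∈ E.filter (fun s => 4 ∣ s), ((m / s : ℕ):ℤ) * c s) - S2 := by
        rw [hS2def]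
        apply dvd_sum_sub
        intro s hs
        obtain ⟨-, -, hms, hrodd, hwr⟩ := hfact4 s hs
        have e : ((m / s : ℕ):ℤ) * c s - ((s/4 : ℕ):ℤ) * c s
            = (((m / s : ℕ):ℤ) - ((s/4 : ℕ):ℤ)) * c s := by ring
        rw [e]
        refine Dvd.dvd.mul_right ?_ _
        rw [hms]
        have h1 : (w / (s / 4)) % 2 = 1 := by omega
        have h2 : (s / 4) % 2 = 1 := by omega
        omega
      have hT3' : (2:ℤ) ∣ T3 := dvd_trans ⟨4, rfl⟩ H3
      have hS2even : (2:ℤ) ∣ S2 := by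
        have h1 := hsplit3
        have h2 := hsplit3E
        omega
      -- parity of S1 via H1
      have hsplit1 := Finset.sum_filter_add_sum_filter_not D (fun s => 2 ∣ s) c
      have hsplit1E := Finset.sum_filter_add_sum_filter_not E (fun s => 4 ∣ s) c
      rw [← hEdef] at hsplit1
      have hc0 : (2:ℤ) ∣ (∑ s ∈ D.filter (fun s => ¬ 2 ∣ s), c s) - S0 := by
        rw [hS0]
        apply dvd_sum_sub
        intro s hs
        have hs2 : ¬ 2 ∣ s := (Finset.mem_filter.mp hs).2
        have e : c s - (s:ℤ) * c s = (1 - (s:ℤ)) * c s := by ring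
        rw [e]
        exact Dvd.dvd.mul_right (by omega) _
      have hc1 : (2:ℤ) ∣ (∑ s ∈ E.filter (fun s => ¬ 4 ∣ s), c s) - S1 := by
        rw [hS1def]
        apply dvd_sum_sub
        intro s hs
        obtain ⟨huodd, -, -⟩ := hfact2 s hs
        have e : c s - ((s/2 : ℕ):ℤ) * c s = (1 - ((s/2 : ℕ):ℤ)) * c s := by ring
        rw [e]
        exact Dvd.dvd.mul_right (by omega) _
      have hc2 : (2:ℤ) ∣ (∑ s ∈ E.filter (fun s => 4 ∣ s), c s) - S2 := by
        rw [hS2def]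
        apply dvd_sum_sub
        intro s hs
        obtain ⟨-, -, -, hrodd, -⟩ := hfact4 s hs
        have e : c s - ((s/4 : ℕ):ℤ) * c s = (1 - ((s/4 : ℕ):ℤ)) * c s := by ring
        rw [e]
        exact Dvd.dvd.mul_right (by omega) _
      have hS1even : (2:ℤ) ∣ S1 := by
        have h1 := hsplit1
        have h2 := hsplit1E
        omega
      -- 4 ∣ S0
      have hS0four : (4:ℤ) ∣ S0 := by
        have h8T2 : (8:ℤ) ∣ T2 := H2
        omega
      apply finish8
      obtain ⟨a, ha⟩ := hS0four
      refine ⟨(w:ℤ) * a, ?_⟩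
      have : (q:ℤ) = 2 * w := by exact_mod_cast hqw
      rw [this, ha]; ring
    · -- v2(m) = 1 : q odd
      have hqodd : ¬ 2 ∣ q := by omega
      set E := D.filter (fun s => 2 ∣ s) with hEdef
      set S1 := ∑ s ∈ E, ((s / 2 : ℕ):ℤ) * c s with hS1def
      have hE2 : ∑ s ∈ E, (s:ℤ) * c s = 2 * S1 := by
        rw [hS1def, Finset.mul_sum]
        refine Finset.sum_congr rfl (fun s hs => ?_)
        obtain ⟨hu, -, -⟩ := hfact s hs
        have : (s:ℤ) = 2 * ((s/2 : ℕ):ℤ) := by exact_mod_cast hu.symm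
        rw [this]; ring
      have hT2eq : T2 = S0 + 2 * S1 := by
        have h1 := hsplit2
        omega
      -- C3
      have hsplit3 := Finset.sum_filter_add_sum_filter_not D (fun s => 2 ∣ s)
          (fun s => ((m / s : ℕ):ℤ) * c s)
      have hC30 : (8:ℤ) ∣ (∑ s ∈ D.filter (fun s => ¬ 2 ∣ s), ((m / s : ℕ):ℤ) * c s)
          - 2 * (q:ℤ) * S0 := by
        rw [hS0, Finset.mul_sum]
        apply dvd_sum_sub
        intro s hs
        have hs2 : ¬ 2 ∣ s := (Finset.mem_filter.mp hs).2
        have hms : (m / s : ℕ) = 2 * (q / s) := by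
          rw [← hqm, Nat.mul_div_assoc 2 (hsq s hs)]
        have key := div_cong8 (hsq s hs) hs2
        have e : ((m / s : ℕ):ℤ) * c s - 2 * (q:ℤ) * ((s:ℤ) * c s)
            = 2 * ((((q / s : ℕ):ℤ) - (q:ℤ) * (s:ℤ)) * c s) + (((m/s : ℕ):ℤ) - 2 * ((q/s : ℕ):ℤ)) * c s := by
          ring
        rw [e]
        have hz : ((m/s : ℕ):ℤ) - 2 * ((q/s : ℕ):ℤ) = 0 := by rw [hms]; push_cast; ring
        rw [hz, zero_mul, add_zero]
        exact ((key.mul_right (c s)).mul_left 2)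
      have hC31 : (8:ℤ) ∣ (∑ s ∈ E, ((m / s : ℕ):ℤ) * c s) - (q:ℤ) * S1 := by
        rw [hS1def, Finset.mul_sum]
        apply dvd_sum_sub
        intro s hs
        obtain ⟨hu, huq, hms⟩ := hfact s hs
        have hsm : s ∣ m := hmem s (Finset.mem_filter.mp hs).1
        have huodd : ¬ 2 ∣ (s / 2) := by
          intro hdvd
          exact h4 (dvd_trans (show (4:ℕ) ∣ s by omega) hsm)
        have key := div_cong8 huq huodd
        have e : ((m / s : ℕ):ℤ) * c s - (q:ℤ) * (((s/2 : ℕ):ℤ) * c s)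
            = (((q / (s/2) : ℕ):ℤ) - (q:ℤ) * ((s/2 : ℕ):ℤ)) * c s
              + (((m/s : ℕ):ℤ) - ((q / (s/2) : ℕ):ℤ)) * c s := by ring
        rw [e]
        have hz : ((m/s : ℕ):ℤ) - ((q / (s/2) : ℕ):ℤ) = 0 := by rw [hms]; ring
        rw [hz, zero_mul, add_zero]
        exact key.mul_right _
      have hqsum : (8:ℤ) ∣ (q:ℤ) * (2 * S0 + S1) := by
        have hd := dvd_add hC31 hC30
        have e : (q:ℤ) * (2 * S0 + S1)
            = T3 - (((∑ s ∈ E, ((m / s : ℕ):ℤ) * c s) - (q:ℤ) * S1)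
              + ((∑ s ∈ D.filter (fun s => ¬ 2 ∣ s), ((m / s : ℕ):ℤ) * c s)
                - 2 * (q:ℤ) * S0)) := by
          rw [hT3def, ← hsplit3]; ring
        rw [e]
        exact dvd_sub H3 hd
      have h2S : (8:ℤ) ∣ 2 * S0 + S1 :=
        sq_cancel (odd_sq8 (by omega : (q:ℤ) % 2 = 1)) hqsum
      have hS0eight : (8:ℤ) ∣ S0 := by
        have h8T2 : (8:ℤ) ∣ T2 := H2
        omega
      apply finish8
      obtain ⟨y, hy⟩ := hS0eight
      exact ⟨(q:ℤ) * y, by rw [hy]; ring⟩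

lemma n3_sq3 {w : ℤ} (hw : ¬ (3:ℤ) ∣ w) : (3 : ℤ) ∣ w * w - 1 := by
  have h : w % 3 = 1 ∨ w % 3 = 2 := by omega
  rcases h with h | h
  · obtain ⟨q, rfl⟩ : ∃ q, w = 3 * q + 1 := ⟨w / 3, by omega⟩
    exact ⟨q * (3 * q + 2), by ring⟩
  · obtain ⟨q, rfl⟩ : ∃ q, w = 3 * q + 2 := ⟨w / 3, by omega⟩
    exact ⟨3 * q * q + 4 * q + 1, by ring⟩

lemma div_cong3 {w s : ℕ} (hs : s ∣ w) (hodd : ¬ 3 ∣ s) :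
    (3 : ℤ) ∣ ((w / s : ℕ) : ℤ) - (w : ℤ) * (s : ℤ) := by
  have h : ((w / s : ℕ) : ℤ) * s = w := by exact_mod_cast Nat.div_mul_cancel hs
  have h8 : (3 : ℤ) ∣ (s : ℤ) * s - 1 := n3_sq3 (by omega)
  have e : ((w / s : ℕ) : ℤ) - w * s = -(((w / s : ℕ) : ℤ)) * ((s:ℤ) * s - 1) := by
    rw [← h]; ring
  rw [e]; exact h8.mul_left _

lemma three_dvd_B (m : ℕ) (h3m : 3 ∣ m) (c : ℕ → ℤ)
    (H2 : (3:ℤ) ∣ ∑ s ∈ m.divisors, (s:ℤ) * c s) :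
    (3:ℤ) ∣ ∑ s ∈ m.divisors.filter (fun s => ¬ 3 ∣ s), ((m / 3 / s : ℕ):ℤ) * c s := by
  set D := m.divisors with hD
  set q := m / 3 with hq
  have hqm : 3 * q = m := Nat.mul_div_cancel' h3m
  have hsq : ∀ s ∈ D.filter (fun s => ¬ 3 ∣ s), s ∣ q := by
    intro s hs
    obtain ⟨hsD, hs3⟩ := Finset.mem_filter.mp hs
    have hsm : s ∣ m := (Nat.mem_divisors.mp hsD).1
    rw [← hqm] at hsm
    exact (((Nat.Prime.coprime_iff_not_dvd Nat.prime_three).mpr hs3).symm).dvd_of_dvd_mul_left hsm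
  set S0 := ∑ s ∈ D.filter (fun s => ¬ 3 ∣ s), (s:ℤ) * c s with hS0
  have C : (3:ℤ) ∣ (∑ s ∈ D.filter (fun s => ¬ 3 ∣ s), ((q / s : ℕ):ℤ) * c s) - (q:ℤ) * S0 := by
    rw [hS0, Finset.mul_sum]
    apply dvd_sum_sub
    intro s hs
    have hs3 : ¬ 3 ∣ s := (Finset.mem_filter.mp hs).2
    have key := div_cong3 (hsq s hs) hs3
    have e : ((q / s : ℕ):ℤ) * c s - (q:ℤ) * ((s:ℤ) * c s)
        = (((q / s : ℕ):ℤ) - (q:ℤ) * (s:ℤ)) * c s := by ring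
    rw [e]; exact key.mul_right _
  have hsplit := Finset.sum_filter_add_sum_filter_not D (fun s => 3 ∣ s)
      (fun s => (s:ℤ) * c s)
  have heven : (3:ℤ) ∣ ∑ s ∈ D.filter (fun s => 3 ∣ s), (s:ℤ) * c s := by
    apply Finset.dvd_sum
    intro s hs
    have h3s : 3 ∣ s := (Finset.mem_filter.mp hs).2
    exact Dvd.dvd.mul_right (by exact_mod_cast Int.natCast_dvd_natCast.mpr h3s) _
  have hS0three : (3:ℤ) ∣ S0 := by omega
  obtain ⟨y, hy⟩ := hS0three
  have hqS : (3:ℤ) ∣ (q:ℤ) * S0 := ⟨(q:ℤ) * y, by rw [hy]; ring⟩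
  have := dvd_add C hqS
  rwa [sub_add_cancel] at this

lemma coe3_split {n t : ℕ} (j p : ℕ) (hn : 0 < n) (hj : 0 < j) (hp : 0 < p) (ht : t ∣ n) :
    coe3 (n / Nat.gcd n j) p (t / Nat.gcd t j) * Nat.gcd t j = coe3 n (j * p) t := by
  have ht0 : 0 < t := Nat.pos_of_dvd_of_pos ht hn
  rw [coe3, coe3, gcd_mul_split t j p ht0 hj hp, ← level_split n j p hn hj hp,
    ← Nat.div_div_eq_div_mul t (Nat.gcd t j) (Nat.gcd (t / Nat.gcd t j) p)]
  ring

-- reindexing lemma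
lemma reindex (n j : ℕ) (hn : 0 < n) (hj : 0 < j) (b : ℕ → ℤ) (f : ℕ → ℤ) :
    ∑ s ∈ (n / Nat.gcd n j).divisors,
      f s * (∑ t ∈ n.divisors.filter (fun t => t / Nat.gcd t j = s), (Nat.gcd t j : ℤ) * b t)
    = ∑ t ∈ n.divisors, f (t / Nat.gcd t j) * ((Nat.gcd t j : ℤ) * b t) := by
  have hmap : ∀ t ∈ n.divisors, t / Nat.gcd t j ∈ (n / Nat.gcd n j).divisors := by
    intro t htm
    rw [Nat.mem_divisors] at htm ⊢
    exact ⟨quot_dvd hj hn htm.1,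
      (Nat.div_pos (Nat.le_of_dvd hn (Nat.gcd_dvd_left n j))
        (Nat.gcd_pos_of_pos_left j hn)).ne'⟩
  rw [← Finset.sum_fiberwise_of_maps_to hmap
    (fun t => f (t / Nat.gcd t j) * ((Nat.gcd t j : ℤ) * b t))]
  refine Finset.sum_congr rfl (fun s _ => ?_)
  rw [Finset.mul_sum]
  refine Finset.sum_congr rfl (fun t htf => ?_)
  rw [(Finset.mem_filter.mp htf).2]

lemma coe3_prime_not {m p s : ℕ} (hp : p.Prime) (hpm : p ∣ m) (hps : ¬ p ∣ s) :
    coe3 m p s = m / p / s := by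
  have h1 : Nat.gcd s p = 1 := (hp.coprime_iff_not_dvd.mpr hps).symm
  have h2 : Nat.gcd m p = p := Nat.gcd_eq_right hpm
  rw [coe3, h1, h2, Nat.div_one, Nat.mul_one]

lemma coe3_prime_dvd {m p s : ℕ} (hp : 0 < p) (hpm : p ∣ m) (hsm : s ∣ m) (hps : p ∣ s) :
    coe3 m p s = p * (m / s) := by
  have h1 : Nat.gcd s p = p := Nat.gcd_eq_right hps
  have h2 : Nat.gcd m p = p := Nat.gcd_eq_right hpm
  rw [coe3, h1, h2]
  have e : m / s = m / p / (s / p) := by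
    conv_lhs => rw [← Nat.mul_div_cancel' hpm, ← Nat.mul_div_cancel' hps]
    rw [Nat.mul_div_mul_left _ _ hp]
  rw [← e, Nat.mul_comm]


lemma prime_step (m : ℕ) (hm : 0 < m) (c : ℕ → ℤ) (p : ℕ) (hp : p.Prime)
    (H1 : (2:ℤ) ∣ ∑ s ∈ m.divisors, c s)
    (H2 : (24:ℤ) ∣ ∑ s ∈ m.divisors, (s:ℤ) * c s)
    (H3 : (24:ℤ) ∣ ∑ s ∈ m.divisors, ((m / s : ℕ):ℤ) * c s) :
    ((2:ℤ) ∣ ∑ s ∈ m.divisors, (Nat.gcd s p : ℤ) * c s) ∧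
    ((24:ℤ) ∣ ∑ s ∈ m.divisors, (coe3 m p s : ℤ) * c s) := by
  constructor
  · -- condition (1) for the powered type
    rcases eq_or_ne p 2 with rfl | hodd
    · have hdiff : (2:ℤ) ∣ (∑ s ∈ m.divisors, (Nat.gcd s 2 : ℤ) * c s)
          - ∑ s ∈ m.divisors, (s:ℤ) * c s := by
        apply dvd_sum_sub
        intro s _
        have e : (Nat.gcd s 2 : ℤ) * c s - (s:ℤ) * c s = ((Nat.gcd s 2 : ℤ) - s) * c s := by
          ring
        rw [e]
        refine Dvd.dvd.mul_right ?_ _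
        by_cases h2s : 2 ∣ s
        · rw [Nat.gcd_eq_right h2s]; omega
        · rw [odd_coprime_two h2s]; omega
      have h2T2 : (2:ℤ) ∣ ∑ s ∈ m.divisors, (s:ℤ) * c s := dvd_trans ⟨12, rfl⟩ H2
      omega
    · have hpodd : ¬ 2 ∣ p := fun h =>
        hodd (((Nat.prime_dvd_prime_iff_eq Nat.prime_two hp).mp h).symm)
      have hdiff : (2:ℤ) ∣ (∑ s ∈ m.divisors, (Nat.gcd s p : ℤ) * c s)
          - ∑ s ∈ m.divisors, c s := by
        apply dvd_sum_sub
        intro s _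
        have e : (Nat.gcd s p : ℤ) * c s - c s = ((Nat.gcd s p : ℤ) - 1) * c s := by ring
        rw [e]
        refine Dvd.dvd.mul_right ?_ _
        have hg2 : ¬ 2 ∣ Nat.gcd s p := fun h => hpodd (h.trans (Nat.gcd_dvd_right s p))
        omega
      omega
  · -- condition (3) for the powered type
    by_cases hpm : p ∣ m
    · set B := ∑ s ∈ m.divisors.filter (fun s => ¬ p ∣ s), ((m / p / s : ℕ):ℤ) * c s with hB
      have hsplitC := Finset.sum_filter_add_sum_filter_not m.divisors (fun s => p ∣ s)
          (fun s => (coe3 m p s : ℤ) * c s)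
      have hsplit3 := Finset.sum_filter_add_sum_filter_not m.divisors (fun s => p ∣ s)
          (fun s => ((m / s : ℕ):ℤ) * c s)
      have hCdvd : ∑ s ∈ m.divisors.filter (fun s => p ∣ s), (coe3 m p s : ℤ) * c s
          = (p:ℤ) * ∑ s ∈ m.divisors.filter (fun s => p ∣ s), ((m / s : ℕ):ℤ) * c s := by
        rw [Finset.mul_sum]
        refine Finset.sum_congr rfl fun s hs => ?_
        obtain ⟨hsD, hps⟩ := Finset.mem_filter.mp hs
        rw [coe3_prime_dvd hp.pos hpm ((Nat.mem_divisors.mp hsD).1) hps]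
        push_cast; ring
      have hCnot : ∑ s ∈ m.divisors.filter (fun s => ¬ p ∣ s), (coe3 m p s : ℤ) * c s
          = B := by
        rw [hB]
        refine Finset.sum_congr rfl fun s hs => ?_
        rw [coe3_prime_not hp hpm (Finset.mem_filter.mp hs).2]
      have hA : ∑ s ∈ m.divisors.filter (fun s => ¬ p ∣ s), ((m / s : ℕ):ℤ) * c s
          = (p:ℤ) * B := by
        rw [hB, Finset.mul_sum]
        refine Finset.sum_congr rfl fun s hs => ?_
        obtain ⟨hsD, hps⟩ := Finset.mem_filter.mp hs
        have hsq : s ∣ m / p := by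
          have hsm : s ∣ m := (Nat.mem_divisors.mp hsD).1
          rw [← Nat.mul_div_cancel' hpm] at hsm
          exact ((hp.coprime_iff_not_dvd.mpr hps).symm).dvd_of_dvd_mul_left hsm
        have hms : (m / s : ℕ) = p * (m / p / s) := by
          conv_lhs => rw [← Nat.mul_div_cancel' hpm]
          rw [Nat.mul_div_assoc p hsq]
        rw [hms]; push_cast; ring
      have key : ∑ s ∈ m.divisors, (coe3 m p s : ℤ) * c s
          = (p:ℤ) * (∑ s ∈ m.divisors, ((m / s : ℕ):ℤ) * c s)
            + (1 - (p:ℤ) * (p:ℤ)) * B := by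
        rw [← hsplitC, ← hsplit3, hCdvd, hCnot, hA]; ring
      rw [key]
      refine dvd_add (H3.mul_left _) ?_
      rcases eq_or_ne p 2 with rfl | h2
      · obtain ⟨y, hy⟩ := eight_dvd_B m hm hpm c H1 (dvd_trans ⟨3, rfl⟩ H2)
          (dvd_trans ⟨3, rfl⟩ H3)
        rw [hB] at *
        rw [hy]
        exact ⟨-y, by push_cast; ring⟩
      rcases eq_or_ne p 3 with rfl | h3
      · obtain ⟨y, hy⟩ := three_dvd_B m hpm c (dvd_trans ⟨8, rfl⟩ H2)
        rw [hB] at *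
        rw [hy]
        exact ⟨-y, by push_cast; ring⟩
      · -- p ≥ 5
        have hp2 : ¬ 2 ∣ p := fun h =>
          h2 (((Nat.prime_dvd_prime_iff_eq Nat.prime_two hp).mp h).symm)
        have hp3 : ¬ 3 ∣ p := fun h =>
          h3 (((Nat.prime_dvd_prime_iff_eq Nat.prime_three hp).mp h).symm)
        have h8 : (8:ℤ) ∣ (p:ℤ) * p - 1 := odd_sq8 (by omega)
        have h3' : (3:ℤ) ∣ (p:ℤ) * p - 1 := n3_sq3 (by omega)
        have h24 : (24:ℤ) ∣ 1 - (p:ℤ) * p := by omega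
        exact h24.mul_right _
    · -- p ∤ m
      have key : ∑ s ∈ m.divisors, (coe3 m p s : ℤ) * c s
          = ∑ s ∈ m.divisors, ((m / s : ℕ):ℤ) * c s := by
        refine Finset.sum_congr rfl fun s hs => ?_
        have hsm := (Nat.mem_divisors.mp hs).1
        have hgs : Nat.gcd s p = 1 := (hp.coprime_iff_not_dvd.mpr
          (fun h => hpm (h.trans hsm))).symm
        have hgm : Nat.gcd m p = 1 := (hp.coprime_iff_not_dvd.mpr hpm).symm
        rw [coe3, hgs, hgm, Nat.div_one, Nat.div_one, Nat.mul_one]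
      rw [key]; exact H3

lemma main_ind (n : ℕ) (hn : 0 < n) (b : ℕ → ℤ)
    (h1 : (2 : ℤ) ∣ ∑ t ∈ n.divisors, b t)
    (h2 : (24 : ℤ) ∣ ∑ t ∈ n.divisors, (t : ℤ) * b t)
    (h3 : (24 : ℤ) ∣ ∑ t ∈ n.divisors, ((n / t : ℕ) : ℤ) * b t) :
    ∀ k, 0 < k →
      ((2:ℤ) ∣ ∑ t ∈ n.divisors, (Nat.gcd t k : ℤ) * b t) ∧
      ((24:ℤ) ∣ ∑ t ∈ n.divisors, (coe3 n k t : ℤ) * b t) := by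
  intro k
  induction k using Nat.strong_induction_on with
  | _ k IH =>
    intro hk
    rcases eq_or_ne k 1 with rfl | hk1
    · constructor
      · have e : ∑ t ∈ n.divisors, (Nat.gcd t 1 : ℤ) * b t = ∑ t ∈ n.divisors, b t := by
          refine Finset.sum_congr rfl fun t _ => ?_
          rw [Nat.gcd_one_right]; push_cast; ring
        rw [e]; exact h1
      · have e : ∑ t ∈ n.divisors, (coe3 n 1 t : ℤ) * b t
            = ∑ t ∈ n.divisors, ((n / t : ℕ):ℤ) * b t := by
          refine Finset.sum_congr rfl fun t _ => ?_
          rw [coe3_one]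
        rw [e]; exact h3
    · obtain ⟨p, hp, hpk⟩ := Nat.exists_prime_and_dvd hk1
      have hj : 0 < k / p := Nat.div_pos (Nat.le_of_dvd hk hpk) hp.pos
      have hjlt : k / p < k := Nat.div_lt_self hk hp.one_lt
      obtain ⟨G1j, G3j⟩ := IH (k / p) hjlt hj
      set j := k / p with hjdef
      have hkj : j * p = k := Nat.div_mul_cancel hpk
      have hm : 0 < n / Nat.gcd n j :=
        Nat.div_pos (Nat.le_of_dvd hn (Nat.gcd_dvd_left n j)) (Nat.gcd_pos_of_pos_left j hn)
      have H1' : (2:ℤ) ∣ ∑ s ∈ (n / Nat.gcd n j).divisors,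
          (∑ t ∈ n.divisors.filter (fun t => t / Nat.gcd t j = s), (Nat.gcd t j : ℤ) * b t) := by
        have e := reindex n j hn hj b (fun _ => (1:ℤ))
        simp only [one_mul] at e
        rw [e]; exact G1j
      have H2' : (24:ℤ) ∣ ∑ s ∈ (n / Nat.gcd n j).divisors, (s:ℤ) *
          (∑ t ∈ n.divisors.filter (fun t => t / Nat.gcd t j = s), (Nat.gcd t j : ℤ) * b t) := by
        rw [reindex n j hn hj b (fun s => (s:ℤ))]
        have e : ∑ t ∈ n.divisors, ((t / Nat.gcd t j : ℕ):ℤ) * ((Nat.gcd t j : ℤ) * b t)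
            = ∑ t ∈ n.divisors, (t:ℤ) * b t := by
          refine Finset.sum_congr rfl fun t _ => ?_
          have h : ((t / Nat.gcd t j : ℕ):ℤ) * (Nat.gcd t j : ℤ) = (t:ℤ) := by
            exact_mod_cast congrArg (Nat.cast (R := ℤ)) (Nat.div_mul_cancel (Nat.gcd_dvd_left t j))
          rw [← h]; ring
        rw [e]; exact h2
      have H3' : (24:ℤ) ∣ ∑ s ∈ (n / Nat.gcd n j).divisors, ((n / Nat.gcd n j / s : ℕ):ℤ) *
          (∑ t ∈ n.divisors.filter (fun t => t / Nat.gcd t j = s), (Nat.gcd t j : ℤ) * b t) := by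
        rw [reindex n j hn hj b (fun s => ((n / Nat.gcd n j / s : ℕ):ℤ))]
        have e : ∑ t ∈ n.divisors, ((n / Nat.gcd n j / (t / Nat.gcd t j) : ℕ):ℤ)
              * ((Nat.gcd t j : ℤ) * b t)
            = ∑ t ∈ n.divisors, (coe3 n j t : ℤ) * b t := by
          refine Finset.sum_congr rfl fun t _ => ?_
          rw [coe3]; push_cast; ring
        rw [e]; exact G3j
      obtain ⟨G1', G3'⟩ := prime_step (n / Nat.gcd n j) hm
        (fun s => ∑ t ∈ n.divisors.filter (fun t => t / Nat.gcd t j = s), (Nat.gcd t j : ℤ) * b t)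
        p hp H1' H2' H3'
      constructor
      · rw [reindex n j hn hj b (fun s => (Nat.gcd s p : ℤ))] at G1'
        have e : ∑ t ∈ n.divisors, (Nat.gcd (t / Nat.gcd t j) p : ℤ) * ((Nat.gcd t j : ℤ) * b t)
            = ∑ t ∈ n.divisors, (Nat.gcd t k : ℤ) * b t := by
          refine Finset.sum_congr rfl fun t ht => ?_
          have ht0 : 0 < t := Nat.pos_of_mem_divisors ht
          have h := gcd_mul_split t j p ht0 hj hp.pos
          rw [hkj] at h
          rw [h]; push_cast; ring
        rw [e] at G1'; exact G1'
      · rw [reindex n j hn hj b (fun s => (coe3 (n / Nat.gcd n j) p s : ℤ))] at G3'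
        have e : ∑ t ∈ n.divisors,
              (coe3 (n / Nat.gcd n j) p (t / Nat.gcd t j) : ℤ) * ((Nat.gcd t j : ℤ) * b t)
            = ∑ t ∈ n.divisors, (coe3 n k t : ℤ) * b t := by
          refine Finset.sum_congr rfl fun t ht => ?_
          have htd : t ∣ n := (Nat.mem_divisors.mp ht).1
          have h := coe3_split j p hn hj hp.pos htd
          rw [hkj] at h
          rw [← h]; push_cast; ring
        rw [e] at G3'; exact G3'

/-- If a cycle type `∏_{t∣n} t^{b_t}` satisfies the eta-quotient conditions
`∑ b_t ≡ 0 (2)`, `∑ t·b_t ≡ 0 (24)`, `∑ (n/t)·b_t ≡ 0 (24)`, then for any `k > 0`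
the quantity `∑_{t∣n} (n/gcd(n,k)) · gcd(t,k)² · b_t / t` is an integer divisible
by `24` (condition (3) for the `k`-th power of the cycle type). -/
theorem stmt12 (n : ℕ) (hn : 0 < n) (b : ℕ → ℤ) (k : ℕ) (hk : 0 < k)
    (h1 : (2 : ℤ) ∣ ∑ t ∈ n.divisors, b t)
    (h2 : (24 : ℤ) ∣ ∑ t ∈ n.divisors, (t : ℤ) * b t)
    (h3 : (24 : ℤ) ∣ ∑ t ∈ n.divisors, ((n / t : ℕ) : ℤ) * b t) :
    ∃ M : ℤ, (∑ t ∈ n.divisors,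
        ((n : ℚ) / (Nat.gcd n k : ℚ)) * (Nat.gcd t k : ℚ) ^ 2 * (b t : ℚ) / (t : ℚ))
      = 24 * (M : ℚ) := by
  obtain ⟨-, G3⟩ := main_ind n hn b h1 h2 h3 k hk
  obtain ⟨M, hM⟩ := G3
  refine ⟨M, ?_⟩
  have e : ∀ t ∈ n.divisors,
      ((n : ℚ) / (Nat.gcd n k : ℚ)) * (Nat.gcd t k : ℚ) ^ 2 * (b t : ℚ) / (t : ℚ)
        = ((coe3 n k t : ℕ) : ℚ) * (b t : ℚ) := by
    intro t ht
    have htd : t ∣ n := (Nat.mem_divisors.mp ht).1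
    have ht0 : 0 < t := Nat.pos_of_mem_divisors ht
    have hg0 : (0:ℚ) < (Nat.gcd n k : ℚ) := by
      exact_mod_cast Nat.gcd_pos_of_pos_left k hn
    have hcast : ((n / Nat.gcd n k : ℕ) : ℚ) = (n : ℚ) / (Nat.gcd n k : ℚ) :=
      Nat.cast_div (Nat.gcd_dvd_left n k) hg0.ne'
    have hcoe := coe3_mul_t k hk hn htd (quot_dvd hk hn htd)
    have hcoeQ : ((coe3 n k t : ℕ):ℚ) * (t:ℚ)
        = ((n / Nat.gcd n k : ℕ):ℚ) * (Nat.gcd t k : ℚ)^2 := by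
      exact_mod_cast congrArg (Nat.cast (R := ℚ)) hcoe
    have ht0Q : (t:ℚ) ≠ 0 := by exact_mod_cast ht0.ne'
    rw [← hcast, div_eq_iff ht0Q]
    linear_combination (-(b t : ℚ)) * hcoeQ
  rw [Finset.sum_congr rfl e]
  rw [show ∑ t ∈ n.divisors, ((coe3 n k t : ℕ):ℚ) * (b t : ℚ)
      = ((∑ t ∈ n.divisors, (coe3 n k t : ℤ) * b t : ℤ) : ℚ) by push_cast; rfl]
  rw [hM]; push_cast; ring
end

section
/- Let A = [[a,b],[c,d]] ∈ SL₂(ℤ) and q a positive integer. Set α = gcd(q·a, c), γ = q/α, a' = q·a/α, c' = c/α. Then gcd(a', c') = 1, and there exist integers b', d' with a'd' − b'c' = 1 such that for all τ, q·(aτ+b)/(cτ+d) = (a'·((ατ+β)/γ) + b')/(c'·((ατ+β)/γ) + d') where β = q·b·d' − d·b'. -/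
/-!
Any common divisor `α` of `q a` and `c` divides `q = q (a d - b c)`, so with `γ = q / α` the
matrix `diag(q, 1) · [[a, b], [c, d]]` factors as `[[a', b'], [c', d']] · [[α, β], [0, γ]]`,
where `[[a', b'], [c', d']] ∈ SL₂(ℤ)` completes the primitive column `(a', c')`. The claimed
identity is this factorization read through the Möbius action.
-/

theorem Int.gcd_mul_left_dvd_of_det_eq_one {a b c d : ℤ} (hdet : a * d - b * c = 1) (q : ℤ) :
    (Int.gcd (q * a) c : ℤ) ∣ q := by
  have hqa := Int.gcd_dvd_left (q * a) c
  have hc := Int.gcd_dvd_right (q * a) c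
  have hq : q * a * d - q * b * c = q := by linear_combination q * hdet
  have h := dvd_sub (hqa.mul_right d) (hc.mul_left (q * b))
  rwa [hq] at h

theorem moebius_comp_affine_eq {K : Type*} [Field K] (a b c d α β γ z : K) (hγ : γ ≠ 0) :
    (a * ((α * z + β) / γ) + b) / (c * ((α * z + β) / γ) + d) =
      (a * α * z + (a * β + b * γ)) / (c * α * z + (c * β + d * γ)) := by
  rw [← mul_div_assoc, ← mul_div_assoc, div_add' _ _ _ hγ, div_add' _ _ _ hγ,
    div_div_div_cancel_right₀ hγ]
  ring_nf

/-- The right column of `[[a', b'], [c', d']] · [[α, β], [0, γ]] = diag(q, 1) · [[a, b], [c, d]]`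
for `β = q b d' - d b'`; the left column holds by hypothesis. -/
theorem mul_upperTriangular_right_column {R : Type*} [CommRing R] [IsDomain R]
    {a b c d q a' b' c' d' α γ : R} (hdet : a * d - b * c = 1) (hbez : a' * d' - b' * c' = 1)
    (hα : α ≠ 0) (hq : α * γ = q) (ha : a' * α = q * a) (hc : c' * α = c) :
    a' * (q * b * d' - d * b') + b' * γ = q * b ∧ c' * (q * b * d' - d * b') + d' * γ = d := by
  have key : a' * d - γ = q * b * c' :=
    mul_right_cancel₀ hα (by linear_combination d * ha - hq - q * b * hc + q * hdet)
  exact ⟨by linear_combination q * b * hbez - b' * key, by linear_combination d * hbez - d' * key⟩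

/-- Decomposition used for transformations of `η(qτ)`: for `[[a,b],[c,d]] ∈ SL₂(ℤ)`
and `q > 0`, set `α = gcd(qa, c)`, `γ = q/α`, `a' = qa/α`, `c' = c/α`.  Then
`gcd(a', c') = 1` and there are integers `b', d'` with `a'd' - b'c' = 1` such that
`q·(aτ+b)/(cτ+d) = (a'·w + b')/(c'·w + d')` where `w = (ατ+β)/γ` and
`β = q·b·d' - d·b'`. -/
theorem stmt18 (a b c d : ℤ) (hdet : a * d - b * c = 1) (q : ℕ) (hq : 0 < q) :
    ∀ (A : ℕ) (a' c' : ℤ), A = Int.gcd ((q : ℤ) * a) c →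
      a' = ((q : ℤ) * a) / (A : ℤ) → c' = c / (A : ℤ) →
      IsCoprime a' c' ∧
      ∃ b' d' : ℤ, a' * d' - b' * c' = 1 ∧
        ∀ τ : ℂ, 0 < τ.im →
          (q : ℂ) * (((a : ℂ) * τ + (b : ℂ)) / ((c : ℂ) * τ + (d : ℂ))) =
            ((a' : ℂ) * (((A : ℂ) * τ + (((q : ℤ) * b * d' - d * b' : ℤ) : ℂ)) /
                ((q : ℂ) / (A : ℂ))) + (b' : ℂ)) /
            ((c' : ℂ) * (((A : ℂ) * τ + (((q : ℤ) * b * d' - d * b' : ℤ) : ℂ)) /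
                ((q : ℂ) / (A : ℂ))) + (d' : ℂ)) := by
  intro A a' c' hA ha' hc'
  have hAq : (A : ℤ) ∣ q := hA ▸ Int.gcd_mul_left_dvd_of_det_eq_one hdet q
  have hA0 : A ≠ 0 := by rintro rfl; simp at hAq; omega
  have hcop : IsCoprime a' c' := by
    rw [Int.isCoprime_iff_gcd_eq_one, ha', hc', hA]
    exact Int.gcd_div_gcd_div_gcd (by omega)
  obtain ⟨u, v, huv⟩ := hcop
  refine ⟨⟨u, v, huv⟩, -v, u, by linear_combination huv, fun τ _ => ?_⟩
  have ha'A : (a' : ℂ) * A = q * a := by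
    exact_mod_cast ha' ▸ Int.ediv_mul_cancel (hA ▸ Int.gcd_dvd_left ((q : ℤ) * a) c)
  have hc'A : (c' : ℂ) * A = c := by
    exact_mod_cast hc' ▸ Int.ediv_mul_cancel (hA ▸ Int.gcd_dvd_right ((q : ℤ) * a) c)
  have hAC : (A : ℂ) ≠ 0 := Nat.cast_ne_zero.mpr hA0
  have hbez : (a' : ℂ) * u - -v * c' = 1 := by exact_mod_cast (by linear_combination huv)
  obtain ⟨hnum, hden⟩ := mul_upperTriangular_right_column (b := (b : ℂ)) (d := (d : ℂ))
    (by exact_mod_cast hdet) hbez hAC (mul_div_cancel₀ _ hAC) ha'A hc'A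
  rw [moebius_comp_affine_eq _ _ _ _ _ _ _ _ (div_ne_zero (by exact_mod_cast hq.ne') hAC)]
  push_cast
  rw [ha'A, hc'A, hnum, hden]
  ring
end
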